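/- Exclusion rule (I): let Q be a mixed strategy of Host and let P be a best response to Q, i.e. E(P, Q) ≥ E(P', Q) for every mixed strategy P'. If Q 0 > 0 then P 1 = 0 (if 1L has positive probability, the best response excludes 1SN); if Q 2 > 0 then P 5 = 0 (2L excludes 2SN); if Q 4 > 0 then P 9 = 0 (3L excludes 3SN). -/

import Mathlib

open Finset

/-- Contestant's payoff matrix for the Monty Hall zero-sum game.
Rows: 1SS,1SN,1NS,1NN,2SS,2SN,2NS,2NN,3SS,3SN,3NS,3NN.
Columns: 1L,1R,2L,2R,3L,3R. -/
def C : Fin 12 → Fin 6 → ℝ :=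
  ![![0,0,1,1,1,1],
    ![0,1,0,0,1,1],
    ![1,0,1,1,0,0],
    ![1,1,0,0,0,0],
    ![1,1,0,0,1,1],
    ![0,0,0,1,1,1],
    ![1,1,1,0,0,0],
    ![0,0,1,1,0,0],
    ![1,1,1,1,0,0],
    ![0,0,1,1,0,1],
    ![1,1,0,0,1,0],
    ![0,0,0,0,1,1]]

/-- A mixed strategy for Contestant. -/
def IsMixedC (P : Fin 12 → ℝ) : Prop := (∀ i, 0 ≤ P i) ∧ ∑ i, P i = 1

/-- A mixed strategy for Host. -/
def IsMixedH (Q : Fin 6 → ℝ) : Prop := (∀ j, 0 ≤ Q j) ∧ ∑ j, Q j = 1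

/-- Expected payoff (Contestant's winning probability) under profile (P,Q). -/
def E (P : Fin 12 → ℝ) (Q : Fin 6 → ℝ) : ℝ := ∑ i, ∑ j, P i * C i j * Q j

/-! 1SN differs from 2SS only against 1L, where 2SS wins and 1SN loses; likewise 2SN and 3SN
differ from 1SS only against 2L and 3L. So against a Host strategy `Q` giving positive weight to
that column, the excluded strategy earns strictly less than its partner, and moving its whole
weight onto the partner would strictly raise the payoff of a best response. -/

open Matrix

section Simplex

variable {ι : Type*} [Fintype ι] [DecidableEq ι]

lemma transfer_mem_stdSimplex {P : ι → ℝ} (hP : P ∈ stdSimplex ℝ ι) {a b : ι} (hab : a ≠ b) :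
    P + P a • (Pi.single b 1 - Pi.single a 1) ∈ stdSimplex ℝ ι := by
  obtain ⟨hP0, hP1⟩ := hP
  refine ⟨fun i => ?_, ?_⟩
  · rcases eq_or_ne i a with rfl | hia
    · simp [hab]
    rcases eq_or_ne i b with rfl | hib
    · simpa [hia] using add_nonneg (hP0 i) (hP0 a)
    · simpa [hia, hib] using hP0 i
  · simp [Finset.sum_add_distrib, ← Finset.mul_sum, Finset.sum_sub_distrib, hP1]

lemma transfer_dotProduct (P f : ι → ℝ) (a b : ι) :
    (P + P a • (Pi.single b 1 - Pi.single a 1)) ⬝ᵥ f = P ⬝ᵥ f + P a * (f b - f a) := by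
  simp [add_dotProduct, smul_dotProduct, sub_dotProduct, single_dotProduct]

lemma eq_zero_of_isMaxOn_stdSimplex {P f : ι → ℝ} (hP : P ∈ stdSimplex ℝ ι)
    (hmax : IsMaxOn (· ⬝ᵥ f) (stdSimplex ℝ ι) P) {a b : ι} (hab : f a < f b) : P a = 0 := by
  have hne : a ≠ b := fun h => hab.ne (congrArg f h)
  have hle := hmax (transfer_mem_stdSimplex hP hne)
  simp only [Set.mem_ofPred_eq, transfer_dotProduct] at hle
  nlinarith [hP.1 a]

end Simplex

lemma E_eq_dotProduct_mulVec (P : Fin 12 → ℝ) (Q : Fin 6 → ℝ) : E P Q = P ⬝ᵥ (C *ᵥ Q) := by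
  simp [E, dotProduct, mulVec, Finset.mul_sum, mul_assoc]

lemma isMaxOn_of_isBestResponse {P : Fin 12 → ℝ} {Q : Fin 6 → ℝ}
    (hbest : ∀ P' : Fin 12 → ℝ, IsMixedC P' → E P Q ≥ E P' Q) :
    IsMaxOn (· ⬝ᵥ (C *ᵥ Q)) (stdSimplex ℝ (Fin 12)) P := fun P' hP' => by
  simpa [E_eq_dotProduct_mulVec] using hbest P' hP'

lemma C_mulVec_add_eq (Q : Fin 6 → ℝ) :
    (C *ᵥ Q) 1 + Q 0 = (C *ᵥ Q) 4 ∧ (C *ᵥ Q) 5 + Q 2 = (C *ᵥ Q) 0 ∧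
      (C *ᵥ Q) 9 + Q 4 = (C *ᵥ Q) 0 := by
  refine ⟨?_, ?_, ?_⟩ <;> simp [C, mulVec, dotProduct, Fin.sum_univ_six] <;> ring

/-- Exclusion rule (I): if XL has positive probability in Q, then every best
response to Q excludes XSN. -/
theorem exclusion_rule_I :
    ∀ (Q : Fin 6 → ℝ) (P : Fin 12 → ℝ), IsMixedH Q → IsMixedC P →
      (∀ P' : Fin 12 → ℝ, IsMixedC P' → E P Q ≥ E P' Q) →
      (Q 0 > 0 → P 1 = 0) ∧ (Q 2 > 0 → P 5 = 0) ∧ (Q 4 > 0 → P 9 = 0) := by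
  intro Q P _ hP hbest
  have hmax := isMaxOn_of_isBestResponse hbest
  obtain ⟨h1, h2, h3⟩ := C_mulVec_add_eq Q
  refine ⟨fun hq => ?_, fun hq => ?_, fun hq => ?_⟩
  · exact eq_zero_of_isMaxOn_stdSimplex (b := 4) hP hmax (by linarith)
  · exact eq_zero_of_isMaxOn_stdSimplex (b := 0) hP hmax (by linarith)
  · exact eq_zero_of_isMaxOn_stdSimplex (b := 0) hP hmax (by linarith)
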